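/- arXiv:2410.12966 — 2 statements merged into one kernel-verified Lean document; each statement's English description precedes it below -/
import Mathlib

section
/- Let (A, p) be an integral market equilibrium for a fair division instance with additive valuations, let i be an agent whose bundle A_i contains only neutral items, and let j* ∉ A_i be an item that is a good or a chore. Then j* is transferable to agent i if and only if the ratio r := v_i(j*)/p_{j*} satisfies: r > 0, r ≥ v_i(j)/p_j for every item j with p_j > 0, and r ≤ v_i(j)/p_j for every item j with p_j < 0. -/
open Finset

/-- Item `j` is a good: some agent values it positively. -/
def IsGood {n : ℕ} {ι : Type*} (v : Fin n → ι → ℝ) (j : ι) : Prop := ∃ i, 0 < v i j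

/-- Item `j` is a chore: every agent values it negatively. -/
def IsChore {n : ℕ} {ι : Type*} (v : Fin n → ι → ℝ) (j : ι) : Prop := ∀ i, v i j < 0

/-- Item `j` is neutral: no agent values it positively and some agent values it zero. -/
def IsNeutral {n : ℕ} {ι : Type*} (v : Fin n → ι → ℝ) (j : ι) : Prop :=
  (∀ i, v i j ≤ 0) ∧ (∃ i, v i j = 0)

/-- `(A, p)` is an integral market equilibrium. -/
def IntMarketEq {n : ℕ} {ι : Type*}
    (v : Fin n → ι → ℝ) (A : Fin n → Finset ι) (p : ι → ℝ) : Prop :=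
  (∀ j : ι, IsGood v j → 0 < p j) ∧
  (∀ j : ι, IsChore v j → p j < 0) ∧
  (∀ j : ι, IsNeutral v j → p j = 0) ∧
  (∀ i, ∃ α : ℝ, 0 < α ∧ (∀ j : ι, v i j ≤ α * p j) ∧ (∀ j ∈ A i, v i j = α * p j))

/-- Item `j` is transferable to agent `i` in the integral market equilibrium
`(A, p)`: moving `j` into agent `i`'s bundle preserves market equilibrium. -/
def Transferable {n : ℕ} {ι : Type*} [DecidableEq ι]
    (v : Fin n → ι → ℝ) (A : Fin n → Finset ι) (p : ι → ℝ)
    (i : Fin n) (j : ι) : Prop :=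
  IntMarketEq v (fun k => if k = i then insert j (A k) else (A k).erase j) p

/-!
Moving `j*` to agent `i` only shrinks the other bundles, so transferability depends on agent `i`
alone. Since `p j* ≠ 0`, the equality `vᵢ(j*) = α p(j*)` forces `α = r`, and `vᵢ ≤ r p` is exactly
the stated range of `r` (items of price zero are never goods, so `vᵢ ≤ 0` there). The neutral items
already in `Aᵢ` have price and value zero, so they satisfy the equality for any `α`.
-/

theorem forall_le_mul_iff {ι : Type*} (f p : ι → ℝ) (α : ℝ) :
    (∀ j, f j ≤ α * p j) ↔
      (∀ j, 0 < p j → f j / p j ≤ α) ∧ (∀ j, p j < 0 → α ≤ f j / p j) ∧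
        (∀ j, p j = 0 → f j ≤ 0) := by
  constructor
  · intro h
    refine ⟨fun j hj => ?_, fun j hj => ?_, fun j hj => ?_⟩
    · exact (div_le_iff₀ hj).2 (h j)
    · exact (le_div_iff_of_neg hj).2 (h j)
    · simpa [hj] using h j
  · rintro ⟨hpos, hneg, hzero⟩ j
    rcases lt_trichotomy (p j) 0 with hj | hj | hj
    · exact (le_div_iff_of_neg hj).1 (hneg j hj)
    · simpa [hj] using hzero j hj
    · exact (div_le_iff₀ hj).1 (hpos j hj)

namespace IntMarketEq

variable {n : ℕ} {ι : Type*} {v : Fin n → ι → ℝ} {A : Fin n → Finset ι} {p : ι → ℝ}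

theorem price_ne_zero (hme : IntMarketEq v A p) {j : ι} (hj : IsGood v j ∨ IsChore v j) :
    p j ≠ 0 :=
  hj.elim (fun hg => (hme.1 j hg).ne') (fun hc => (hme.2.1 j hc).ne)

theorem valuation_nonpos_of_price_eq_zero (hme : IntMarketEq v A p) (i : Fin n) {j : ι}
    (hj : p j = 0) : v i j ≤ 0 := by
  by_contra! hpos
  exact (hme.1 j ⟨i, hpos⟩).ne' hj

theorem valuation_eq_zero_of_mem_of_isNeutral (hme : IntMarketEq v A p) {i : Fin n} {j : ι}
    (hj : j ∈ A i) (hneutral : IsNeutral v j) : v i j = 0 := by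
  obtain ⟨α, -, -, hbundle⟩ := hme.2.2.2 i
  rw [hbundle j hj, hme.2.2.1 j hneutral, mul_zero]

theorem transferable_of_forall_le_mul [DecidableEq ι] (hme : IntMarketEq v A p) {i : Fin n}
    {jstar : ι} {α : ℝ} (hα : 0 < α) (hle : ∀ j, v i j ≤ α * p j)
    (hbundle : ∀ j ∈ insert jstar (A i), v i j = α * p j) : Transferable v A p i jstar := by
  refine ⟨hme.1, hme.2.1, hme.2.2.1, fun k => ?_⟩
  by_cases hk : k = i
  · subst hk
    exact ⟨α, hα, hle, by simpa using hbundle⟩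
  · obtain ⟨β, hβ, hβle, hβbundle⟩ := hme.2.2.2 k
    refine ⟨β, hβ, hβle, fun j hj => hβbundle j ?_⟩
    simp only [if_neg hk] at hj
    exact mem_of_mem_erase hj

end IntMarketEq

theorem Transferable.exists_forall_le_mul {n : ℕ} {ι : Type*} [DecidableEq ι]
    {v : Fin n → ι → ℝ} {A : Fin n → Finset ι} {p : ι → ℝ} {i : Fin n} {jstar : ι}
    (htr : Transferable v A p i jstar) :
    ∃ α, 0 < α ∧ (∀ j, v i j ≤ α * p j) ∧ v i jstar = α * p jstar := by
  obtain ⟨α, hα, hle, hbundle⟩ := htr.2.2.2 i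
  exact ⟨α, hα, hle, hbundle jstar (by simp)⟩

theorem transferable_iff_ratio_in_range_general
    {n : ℕ} {ι : Type*} [DecidableEq ι]
    (v : Fin n → ι → ℝ) (A : Fin n → Finset ι) (p : ι → ℝ)
    (hme : IntMarketEq v A p)
    (i : Fin n) (hneutral : ∀ j ∈ A i, IsNeutral v j)
    (jstar : ι)
    (hjstargc : IsGood v jstar ∨ IsChore v jstar) :
    Transferable v A p i jstar ↔
      (0 < v i jstar / p jstar ∧
       (∀ j : ι, 0 < p j → v i j / p j ≤ v i jstar / p jstar) ∧
       (∀ j : ι, p j < 0 → v i jstar / p jstar ≤ v i j / p j)) := by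
  have hpstar := hme.price_ne_zero hjstargc
  constructor
  · intro htr
    obtain ⟨α, hα, hle, hstar⟩ := htr.exists_forall_le_mul
    have hratio : v i jstar / p jstar = α := by rw [hstar, mul_div_cancel_right₀ _ hpstar]
    obtain ⟨hpos, hneg, -⟩ := (forall_le_mul_iff _ _ α).1 hle
    exact hratio ▸ ⟨hα, hpos, hneg⟩
  · rintro ⟨hrpos, hpos, hneg⟩
    refine hme.transferable_of_forall_le_mul hrpos ((forall_le_mul_iff _ _ _).2
      ⟨hpos, hneg, fun j => hme.valuation_nonpos_of_price_eq_zero i⟩) ?_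
    intro j hj
    rcases mem_insert.1 hj with rfl | hj
    · rw [div_mul_cancel₀ _ hpstar]
    · rw [hme.valuation_eq_zero_of_mem_of_isNeutral hj (hneutral j hj),
        hme.2.2.1 j (hneutral j hj), mul_zero]

/-- If agent `i`'s bundle contains only neutral items, then a good or chore
`j* ∉ Aᵢ` is transferable to `i` iff the ratio `r = vᵢ(j*)/p(j*)` is positive,
at least `vᵢ(j)/p(j)` for every item `j` of positive price, and at most
`vᵢ(j)/p(j)` for every item `j` of negative price. -/
theorem transferable_iff_ratio_in_range
    {n : ℕ} {ι : Type*} [Fintype ι] [DecidableEq ι]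
    (v : Fin n → ι → ℝ) (A : Fin n → Finset ι) (p : ι → ℝ)
    (hpart : ∀ j : ι, ∃! i, j ∈ A i)
    (hme : IntMarketEq v A p)
    (i : Fin n) (hneutral : ∀ j ∈ A i, IsNeutral v j)
    (jstar : ι) (hjstar : jstar ∉ A i)
    (hjstargc : IsGood v jstar ∨ IsChore v jstar) :
    Transferable v A p i jstar ↔
      (0 < v i jstar / p jstar ∧
       (∀ j : ι, 0 < p j → v i j / p j ≤ v i jstar / p jstar) ∧
       (∀ j : ι, p j < 0 → v i jstar / p jstar ≤ v i j / p j)) :=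
  transferable_iff_ratio_in_range_general v A p hme i hneutral jstar hjstargc
end

section
/- Consider two agents with positive entitlements w_1, w_2, an allocation A = (A_1, A_2) of a finite item set M, and a price vector p : M → ℝ. Suppose agent 1 pWEF1-envies agent 2 in (A, p). Let B be obtained from A either (i) by moving a single item ĝ ∈ A_2 into agent 1's bundle (B_1 = A_1 ∪ {ĝ}, B_2 = A_2 ∖ {ĝ}), or (ii) by moving a single item ĉ ∈ A_1 into agent 2's bundle (B_1 = A_1 ∖ {ĉ}, B_2 = A_2 ∪ {ĉ}). Then agent 2 does not pWEF1-envy agent 1 in (B, p). -/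
open Finset

/- In either case the reverse envy would have to survive removing the transferred item from
the envied bundle, which restores the original bundles and contradicts the original envy
after that same removal. -/

/-- Price of a bundle. -/
noncomputable def bundleVal {ι : Type*} (p : ι → ℝ) (S : Finset ι) : ℝ := ∑ t ∈ S, p t

/-- The agent with entitlement `wi` and bundle `Ai` pWEF1-envies the agent with
entitlement `wj` and bundle `Aj`, under prices `p`. -/
def PWEF1Envies {ι : Type*} [DecidableEq ι] (p : ι → ℝ) (wi wj : ℝ)
    (Ai Aj : Finset ι) : Prop :=
  bundleVal p Ai / wi < bundleVal p Aj / wj ∧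
  (∀ g ∈ Aj, bundleVal p Ai / wi < bundleVal p (Aj.erase g) / wj) ∧
  (∀ c ∈ Ai, bundleVal p (Ai.erase c) / wi < bundleVal p Aj / wj)

section Transfer

variable {ι : Type*} [DecidableEq ι] {p : ι → ℝ} {wi wj : ℝ} {Ai Aj : Finset ι}

theorem PWEF1Envies.not_reverse_of_transfer_to_envier {g : ι}
    (henvy : PWEF1Envies p wi wj Ai Aj)
    (hg : g ∈ Aj) (hgi : g ∉ Ai) :
    ¬ PWEF1Envies p wj wi (Aj.erase g) (insert g Ai) := by
  rintro ⟨-, hrev, -⟩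
  have hlt := hrev g (mem_insert_self g Ai)
  rw [erase_insert hgi] at hlt
  exact (henvy.2.1 g hg).not_gt hlt

theorem PWEF1Envies.not_reverse_of_transfer_from_envier {c : ι}
    (henvy : PWEF1Envies p wi wj Ai Aj)
    (hc : c ∈ Ai) (hcj : c ∉ Aj) :
    ¬ PWEF1Envies p wj wi (insert c Aj) (Ai.erase c) := by
  rintro ⟨-, -, hrev⟩
  have hlt := hrev c (mem_insert_self c Aj)
  rw [erase_insert hcj] at hlt
  exact (henvy.2.2 c hc).not_gt hlt

end Transfer

theorem no_reverse_pwef1_envy_after_transfer_general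
    {ι : Type*} [DecidableEq ι]
    (p : ι → ℝ) (w₁ w₂ : ℝ)
    (A₁ A₂ : Finset ι) (hdisj : Disjoint A₁ A₂)
    (henvy : PWEF1Envies p w₁ w₂ A₁ A₂)
    (B₁ B₂ : Finset ι)
    (hB : (∃ g ∈ A₂, B₁ = insert g A₁ ∧ B₂ = A₂.erase g) ∨
          (∃ c ∈ A₁, B₁ = A₁.erase c ∧ B₂ = insert c A₂)) :
    ¬ PWEF1Envies p w₂ w₁ B₂ B₁ := by
  rcases hB with ⟨g, hg, rfl, rfl⟩ | ⟨c, hc, rfl, rfl⟩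
  · exact henvy.not_reverse_of_transfer_to_envier hg (disjoint_right.mp hdisj hg)
  · exact henvy.not_reverse_of_transfer_from_envier hc (disjoint_left.mp hdisj hc)

/-- If agent 1 pWEF1-envies agent 2, then after transferring a single item
(either an item `ĝ` from agent 2's bundle to agent 1, or an item `ĉ` from
agent 1's bundle to agent 2), agent 2 does not pWEF1-envy agent 1. -/
theorem no_reverse_pwef1_envy_after_transfer
    {ι : Type*} [DecidableEq ι]
    (p : ι → ℝ) (w₁ w₂ : ℝ) (hw₁ : 0 < w₁) (hw₂ : 0 < w₂)
    (A₁ A₂ : Finset ι) (hdisj : Disjoint A₁ A₂)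
    (henvy : PWEF1Envies p w₁ w₂ A₁ A₂)
    (B₁ B₂ : Finset ι)
    (hB : (∃ g ∈ A₂, B₁ = insert g A₁ ∧ B₂ = A₂.erase g) ∨
          (∃ c ∈ A₁, B₁ = A₁.erase c ∧ B₂ = insert c A₂)) :
    ¬ PWEF1Envies p w₂ w₁ B₂ B₁ :=
  no_reverse_pwef1_envy_after_transfer_general p w₁ w₂ A₁ A₂ hdisj henvy B₁ B₂ hB
end
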